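/- Let p ∈ OFS with min(p) = gcd(p). Then fw(p) = min(p) and f(p) = max(p). -/

import Mathlib

/-- `OFS p`: `p` is a strictly increasing nonempty finite sequence of positive integers. -/
def OFS (p : List ℕ) : Prop := p ≠ [] ∧ p.Pairwise (· < ·) ∧ ∀ x ∈ p, 0 < x

/-- The reduction operation `R`. -/
def R : List ℕ → List ℕ
  | [] => []
  | [a] => [a]
  | a :: b :: rest => (((b :: rest).map (fun x => x - a)).insert a).mergeSort (· ≤ ·)

/-- `max(p)` -/
def maxL (p : List ℕ) : ℕ := p.foldr max 0

/-- `gcd(p)` -/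
def gcdL (p : List ℕ) : ℕ := p.foldr Nat.gcd 0

/-- Fuel-based auxiliary for `f`; `maxL p + 1` fuel always suffices since
`maxL` strictly decreases under `R` for lists of length `> 1`. -/
def faux : ℕ → List ℕ → ℕ
  | _, [] => 0
  | _, [a] => a
  | 0, _ => 0
  | fuel+1, p => p.headI + faux fuel (R p)

/-- The function `f` of Castelli–Mignosi–Restivo: `f p = p₁` if `|p| = 1`,
and `f p = p₁ + f (R p)` otherwise. -/
def f (p : List ℕ) : ℕ := faux (maxL p + 1) p

/-- The function `fw` of Tijdeman–Zamboni. -/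
def fw (p : List ℕ) : ℕ :=
  if h : 1 < p.length ∧ gcdL p.dropLast = gcdL p ∧ f p.dropLast ≤ maxL p
  then fw p.dropLast
  else f p
termination_by p.length
decreasing_by
  simp only [List.length_dropLast]
  omega

/-- The Fine–Wilf graph `G(p,k)` on vertex set `{1,…,k}` (represented by `Fin k`,
with `v : Fin k` standing for the integer `v+1`); `i` and `j` are adjacent iff
`|i - j|` is an entry of `p`. -/
def G (p : List ℕ) (k : ℕ) : SimpleGraph (Fin k) where
  Adj i j := i ≠ j ∧ (((j : ℕ) - (i : ℕ)) ∈ p ∨ ((i : ℕ) - (j : ℕ)) ∈ p)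
  symm := by
    exact ⟨fun i j h => ⟨h.1.symm, h.2.symm⟩⟩
  loopless := by
    exact ⟨fun i h => h.1 rfl⟩

/-- `p` is trim. -/
def Trim (p : List ℕ) : Prop :=
  p.length = 1 ∨ (1 < p.length ∧
    (gcdL p ≠ gcdL p.dropLast ∨ (gcdL p = gcdL p.dropLast ∧ maxL p < f p.dropLast)))

section aux

lemma le_maxL' {x : ℕ} : ∀ {l : List ℕ}, x ∈ l → x ≤ l.foldr max 0 := by
  intro l
  induction l with
  | nil => simp
  | cons a t ih =>
    intro hx
    rcases List.mem_cons.1 hx with rfl | hx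
    · simp [List.foldr]
    · exact le_trans (ih hx) (le_max_right _ _)

lemma maxL_le' {M : ℕ} : ∀ {l : List ℕ}, (∀ x ∈ l, x ≤ M) → l.foldr max 0 ≤ M := by
  intro l
  induction l with
  | nil => simp
  | cons a t ih =>
    intro hx
    simp only [List.foldr]
    exact max_le (hx a (by simp)) (ih fun x h => hx x (by simp [h]))

lemma gcdL_dvd' {x : ℕ} : ∀ {l : List ℕ}, x ∈ l → l.foldr Nat.gcd 0 ∣ x := by
  intro l
  induction l with
  | nil => simp
  | cons a t ih =>
    intro hx
    rcases List.mem_cons.1 hx with rfl | hx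
    · exact Nat.gcd_dvd_left _ _
    · exact dvd_trans (Nat.gcd_dvd_right _ _) (ih hx)

lemma dvd_gcdL' {d : ℕ} : ∀ {l : List ℕ}, (∀ x ∈ l, d ∣ x) → d ∣ l.foldr Nat.gcd 0 := by
  intro l
  induction l with
  | nil => simp
  | cons a t ih =>
    intro hx
    exact Nat.dvd_gcd (hx a (by simp)) (ih fun x h => hx x (by simp [h]))

lemma maxL_map_sub {a : ℕ} : ∀ {l : List ℕ}, l ≠ [] → (∀ x ∈ l, a ≤ x) →
    (l.map (fun x => x - a)).foldr max 0 = l.foldr max 0 - a := by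
  intro l
  induction l with
  | nil => simp
  | cons b t ih =>
    intro _ hge
    rcases eq_or_ne t [] with rfl | ht
    · simp
    · have := ih ht fun x hx => hge x (by simp [hx])
      have hb := hge b (by simp)
      simp only [List.map, List.foldr, this]
      have h1 : b ≤ t.foldr max 0 ∨ t.foldr max 0 ≤ b := le_total _ _
      omega

end aux

section Rlem

variable {a b : ℕ} {rest : List ℕ}

lemma mem_R_iff {x : ℕ} :
    x ∈ R (a :: b :: rest) ↔ x = a ∨ x ∈ (b :: rest).map (fun y => y - a) := by
  rw [R]
  rw [(List.mergeSort_perm _ _).mem_iff]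
  exact List.mem_insert_iff

lemma R_facts (hs : (a :: b :: rest).Pairwise (· < ·)) (hpos : ∀ x ∈ (a :: b :: rest), 0 < x)
    (hdvd : ∀ x ∈ (a :: b :: rest), a ∣ x) :
    OFS (R (a :: b :: rest)) ∧ (R (a :: b :: rest)).headI = a ∧
    (∀ x ∈ R (a :: b :: rest), a ∣ x) ∧
    (R (a :: b :: rest)).foldr max 0 = (a :: b :: rest).foldr max 0 - a := by
  have ha : 0 < a := hpos a (by simp)
  have htail : ∀ x ∈ (b :: rest), 2 * a ≤ x := by
    intro x hx
    have h1 : a < x := (List.pairwise_cons.1 hs).1 x hx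
    have h2 : a ∣ x := hdvd x (by simp [hx])
    rcases h2 with ⟨k, rfl⟩
    have : 2 ≤ k := by nlinarith
    nlinarith
  -- members of R
  have hmem : ∀ x ∈ R (a :: b :: rest), a ≤ x ∧ a ∣ x := by
    intro x hx
    rcases mem_R_iff.1 hx with rfl | hx
    · exact ⟨le_refl _, dvd_refl _⟩
    · rcases List.mem_map.1 hx with ⟨y, hy, rfl⟩
      have h2 := htail y hy
      have h3 : a ∣ y := hdvd y (by simp [hy])
      constructor
      · omega
      · exact (Nat.dvd_sub h3 (dvd_refl a))
  have haR : a ∈ R (a :: b :: rest) := mem_R_iff.2 (Or.inl rfl)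
  -- nodup
  have hmnd : ((b :: rest).map (fun y => y - a)).Pairwise (· < ·) := by
    rw [List.pairwise_map]
    refine (List.pairwise_cons.1 hs).2.imp_of_mem ?_
    intro x y hx hy hlt
    have := htail x hx
    omega
  have hnodup : (R (a :: b :: rest)).Nodup := by
    rw [R, (List.mergeSort_perm _ _).nodup_iff]
    exact List.Nodup.insert (hmnd.imp ne_of_lt)
  -- sorted
  have hsorted : (R (a :: b :: rest)).Pairwise (· < ·) := by
    refine (List.Pairwise.and (?_ : (R (a :: b :: rest)).Pairwise (· ≤ ·)) hnodup).imp (fun h => lt_of_le_of_ne h.1 h.2)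
    rw [R]
    have := List.pairwise_mergeSort (le := fun x y : ℕ => decide (x ≤ y))
      (by intro a b c; simp; omega) (by intro a b; simp; omega)
      (((b :: rest).map (fun x => x - a)).insert a)
    refine this.imp ?_
    intro x y h
    simpa using h
  -- head
  have hne : R (a :: b :: rest) ≠ [] := List.ne_nil_of_mem haR
  have hhead : (R (a :: b :: rest)).headI = a := by
    rcases hR : R (a :: b :: rest) with _ | ⟨c, t⟩
    · exact absurd hR hne
    · have hc : a ≤ c := (hmem c (by rw [hR]; simp)).1
      rw [hR] at haR
      rcases List.mem_cons.1 haR with rfl | hat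
      · rfl
      · have : c < a := by
          have := (List.pairwise_cons.1 (hR ▸ hsorted)).1 a hat
          exact this
        omega
  -- max
  have hmax : (R (a :: b :: rest)).foldr max 0 = (a :: b :: rest).foldr max 0 - a := by
    have hperm : (R (a :: b :: rest)).Perm (((b :: rest).map (fun x => x - a)).insert a) := by
      rw [R]; exact List.mergeSort_perm _ _
    have h1 : (R (a :: b :: rest)).foldr max 0
        = (((b :: rest).map (fun x => x - a)).insert a).foldr max 0 :=
      hperm.foldr_eq _
    have hm : ((b :: rest).map (fun x => x - a)).foldr max 0 = (b :: rest).foldr max 0 - a :=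
      maxL_map_sub (by simp) (fun x hx => by have := htail x hx; omega)
    have hbm : 2 * a ≤ (b :: rest).foldr max 0 :=
      le_trans (htail b (by simp)) (le_maxL' (by simp))
    have h2 : (((b :: rest).map (fun x => x - a)).insert a).foldr max 0
        = (b :: rest).foldr max 0 - a := by
      by_cases hcase : a ∈ (b :: rest).map (fun x => x - a)
      · rw [List.insert_of_mem hcase, hm]
      · rw [List.insert_of_not_mem hcase, List.foldr_cons, hm]
        exact max_eq_right (by omega)
    have h3 : (a :: b :: rest).foldr max 0 = (b :: rest).foldr max 0 := by
      rw [List.foldr_cons]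
      exact max_eq_right (by omega)
    rw [h1, h2, h3]
  exact ⟨⟨hne, hsorted, fun x hx => by have := hmem x hx; omega⟩, hhead,
    fun x hx => (hmem x hx).2, hmax⟩

end Rlem

lemma faux_eq_max : ∀ n : ℕ, ∀ p : List ℕ, OFS p → (∀ x ∈ p, p.headI ∣ x) →
    p.foldr max 0 ≤ n → faux (n + 1) p = p.foldr max 0 := by
  intro n
  induction n with
  | zero =>
    intro p hp hdvd hle
    rcases p with _ | ⟨a, t⟩
    · exact absurd rfl hp.1
    · have := hp.2.2 a (by simp)
      have := le_maxL' (l := a :: t) (x := a) (by simp)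
      omega
  | succ n ih =>
    intro p hp hdvd hle
    rcases p with _ | ⟨a, t⟩
    · exact absurd rfl hp.1
    rcases t with _ | ⟨b, rest⟩
    · simp [faux]
    · have ha : 0 < a := hp.2.2 a (by simp)
      obtain ⟨hOFS, hhead, hdvd', hmax⟩ := R_facts hp.2.1 hp.2.2 (by simpa using hdvd)
      have hfaux : faux (n + 1 + 1) (a :: b :: rest) = a + faux (n + 1) (R (a :: b :: rest)) := rfl
      have hb : a < b := (List.pairwise_cons.1 hp.2.1).1 b (by simp)
      have hble : b ≤ (a :: b :: rest).foldr max 0 := le_maxL' (by simp)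
      have hRle : (R (a :: b :: rest)).foldr max 0 ≤ n := by omega
      have := ih (R (a :: b :: rest)) hOFS (by rw [hhead]; exact hdvd') hRle
      rw [hfaux, this, hmax]
      have haM : a ≤ (a :: b :: rest).foldr max 0 := le_maxL' (by simp)
      omega

lemma f_eq_max (p : List ℕ) (hp : OFS p) (hdvd : ∀ x ∈ p, p.headI ∣ x) :
    f p = maxL p :=
  faux_eq_max (maxL p) p hp hdvd (le_refl _)

lemma fw_eq_head : ∀ n : ℕ, ∀ p : List ℕ, p.length ≤ n → OFS p →
    (∀ x ∈ p, p.headI ∣ x) → fw p = p.headI := by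
  intro n
  induction n with
  | zero =>
    intro p hl hp _
    rcases p with _ | ⟨a, t⟩
    · exact absurd rfl hp.1
    · simp at hl
  | succ n ih =>
    intro p hl hp hdvd
    rcases p with _ | ⟨a, t⟩
    · exact absurd rfl hp.1
    rcases t with _ | ⟨b, rest⟩
    · rw [fw]
      rw [dif_neg (by simp)]
      have := f_eq_max [a] hp hdvd
      simpa [maxL] using this
    · -- dropLast facts
      set p := a :: b :: rest with hpdef
      have hdl : p.dropLast = a :: (b :: rest).dropLast := List.dropLast_cons₂
      have hdlsub : p.dropLast.Sublist p := List.dropLast_sublist p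
      have hdlOFS : OFS p.dropLast := by
        refine ⟨by rw [hdl]; simp, List.Pairwise.sublist hdlsub hp.2.1, fun x hx => hp.2.2 x (hdlsub.mem hx)⟩
      have hdlhead : p.dropLast.headI = a := by rw [hdl]; rfl
      have hdldvd : ∀ x ∈ p.dropLast, p.dropLast.headI ∣ x := by
        intro x hx
        rw [hdlhead]
        exact hdvd x (hdlsub.mem hx)
      have hgcdp : gcdL p = a := by
        apply Nat.dvd_antisymm
        · exact gcdL_dvd' (by simp [hpdef])
        · exact dvd_gcdL' hdvd
      have hgcddl : gcdL p.dropLast = a := by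
        apply Nat.dvd_antisymm
        · exact gcdL_dvd' (by rw [hdl]; simp)
        · exact dvd_gcdL' hdldvd
      have hfdl : f p.dropLast = maxL p.dropLast := f_eq_max _ hdlOFS hdldvd
      have hmle : maxL p.dropLast ≤ maxL p :=
        maxL_le' fun x hx => le_maxL' (hdlsub.mem hx)
      have hcond : 1 < p.length ∧ gcdL p.dropLast = gcdL p ∧ f p.dropLast ≤ maxL p := by
        refine ⟨by simp [hpdef], by rw [hgcddl, hgcdp], by rw [hfdl]; exact hmle⟩
      rw [fw, dif_pos hcond]
      have hlen : p.dropLast.length ≤ n := by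
        have : p.length = p.dropLast.length + 1 := by
          rw [List.length_dropLast]; simp [hpdef]
        omega
      rw [ih p.dropLast hlen hdlOFS hdldvd, hdlhead]
      rfl

theorem min_eq_gcd (p : List ℕ) (hp : OFS p) (h : p.headI = gcdL p) :
    fw p = p.headI ∧ f p = maxL p := by
  have hdvd : ∀ x ∈ p, p.headI ∣ x := by
    intro x hx
    rw [h]
    exact gcdL_dvd' hx
  exact ⟨fw_eq_head p.length p (le_refl _) hp hdvd, f_eq_max p hp hdvd⟩
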